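/- arXiv:1312.4567 — 2 statements merged into one kernel-verified Lean document; each statement's English description precedes it below -/
import Mathlib

section
/- For every n ≥ 2, the central basis element X₁ of the (2n+1)-dimensional Heisenberg Lie algebra lies in the radical of every 2-cocycle: if ω is a 2-cocycle on 𝔥_{2n+1}, then ω(X₁, v) = 0 for every v ∈ 𝔥_{2n+1}. -/
/-- The componentwise Lie ring structure on the product of two Lie rings. -/
instance prodLieRing (L M : Type*) [LieRing L] [LieRing M] : LieRing (L × M) where
  bracket x y := (⁅x.1, y.1⁆, ⁅x.2, y.2⁆)
  add_lie x y z := by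
    show (⁅x.1 + y.1, z.1⁆, ⁅x.2 + y.2, z.2⁆) = _
    simp [add_lie, Prod.ext_iff]
  lie_add x y z := by
    show (⁅x.1, y.1 + z.1⁆, ⁅x.2, y.2 + z.2⁆) = _
    simp [lie_add, Prod.ext_iff]
  lie_self x := by
    show (⁅x.1, x.1⁆, ⁅x.2, x.2⁆) = (0, 0)
    simp
  leibniz_lie x y z := by
    show (⁅x.1, ⁅y.1, z.1⁆⁆, ⁅x.2, ⁅y.2, z.2⁆⁆) = _
    simp only [Prod.ext_iff]
    constructor <;> exact leibniz_lie _ _ _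

/-- The componentwise Lie algebra structure on the product of two Lie algebras. -/
instance prodLieAlgebra (R L M : Type*) [CommRing R] [LieRing L] [LieRing M]
    [LieAlgebra R L] [LieAlgebra R M] : LieAlgebra R (L × M) :=
  { (inferInstance : Module R (L × M)) with
    lie_smul := fun t x y => by
      show (⁅x.1, (t • y).1⁆, ⁅x.2, (t • y).2⁆) = t • (⁅x.1, y.1⁆, ⁅x.2, y.2⁆)
      simp [Prod.smul_def, Prod.ext_iff] }

/-- A 2-cocycle on a real Lie algebra `L`: an alternating (hence skew-symmetric) bilinear
form `ω` such that `ω ⁅x,y⁆ z + ω ⁅y,z⁆ x + ω ⁅z,x⁆ y = 0` for all `x y z`. -/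
def IsCocycle {L : Type*} [LieRing L] [LieAlgebra ℝ L]
    (ω : L →ₗ[ℝ] L →ₗ[ℝ] ℝ) : Prop :=
  (∀ x, ω x x = 0) ∧ ∀ x y z, ω ⁅x, y⁆ z + ω ⁅y, z⁆ x + ω ⁅z, x⁆ y = 0

/-- A symplectic structure on a real Lie algebra: a nondegenerate 2-cocycle. -/
def IsSymplecticForm {L : Type*} [LieRing L] [LieAlgebra ℝ L]
    (ω : L →ₗ[ℝ] L →ₗ[ℝ] ℝ) : Prop :=
  IsCocycle ω ∧ ∀ x, (∀ y, ω x y = 0) → x = 0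

/-- `b` is a Heisenberg basis of `L` (so `L ≅ 𝔥_{2n+1}`): writing `X k = b (k-1)`
(`b` is 0-indexed), the only nonzero brackets of basis vectors are
`⁅X_{2i}, X_{2i+1}⁆ = X₁ = -⁅X_{2i+1}, X_{2i}⁆` for `i = 1, …, n`. -/
def IsHeisenbergBasis {n : ℕ} {L : Type*} [LieRing L] [LieAlgebra ℝ L]
    (b : Module.Basis (Fin (2 * n + 1)) ℝ L) : Prop :=
  ∀ i j : Fin (2 * n + 1),
    ⁅b i, b j⁆ =
      if (i : ℕ) % 2 = 1 ∧ (j : ℕ) = (i : ℕ) + 1 then b 0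
      else if (j : ℕ) % 2 = 1 ∧ (i : ℕ) = (j : ℕ) + 1 then -(b 0)
      else 0

/-!
The centre `X₁` is a commutator `⁅x, y⁆` of two basis vectors forming one of the `n` symplectic
pairs. Given a basis vector `z`, since `n ≥ 2` we may pick a pair not containing `z`, so that
`x` and `y` commute with `z`; the cocycle identity for `x, y, z` then reduces to
`ω ⁅x, y⁆ z = 0`.
-/

section Cocycle

variable {L : Type*} [LieRing L] [LieAlgebra ℝ L] {ω : L →ₗ[ℝ] L →ₗ[ℝ] ℝ}

theorem IsCocycle.apply_lie_eq_zero (hω : IsCocycle ω) {x y z : L}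
    (hyz : ⁅y, z⁆ = 0) (hzx : ⁅z, x⁆ = 0) : ω ⁅x, y⁆ z = 0 := by
  simpa [hyz, hzx] using hω.2 x y z

end Cocycle

namespace IsHeisenbergBasis

variable {n : ℕ} {L : Type*} [LieRing L] [LieAlgebra ℝ L]
  {b : Module.Basis (Fin (2 * n + 1)) ℝ L}

theorem lie_odd_succ (hb : IsHeisenbergBasis b) {i : ℕ} (hi : i % 2 = 1)
    (h : i + 1 < 2 * n + 1) : ⁅b ⟨i, by omega⟩, b ⟨i + 1, h⟩⁆ = b 0 := by
  rw [hb, if_pos ⟨hi, rfl⟩]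

/-- The index `(i + 1) / 2` labels the block of `X_{i+1}`: block `0` is the centre and block
`m ≥ 1` is the pair `X_{2m}, X_{2m+1}`. -/
theorem lie_eq_zero_of_div_two_ne (hb : IsHeisenbergBasis b) {i j : Fin (2 * n + 1)}
    (h : ((i : ℕ) + 1) / 2 ≠ ((j : ℕ) + 1) / 2) : ⁅b i, b j⁆ = 0 := by
  rw [hb, if_neg (by omega), if_neg (by omega)]

theorem exists_lie_eq_center_of_commute (hn : 2 ≤ n) (hb : IsHeisenbergBasis b)
    (k : Fin (2 * n + 1)) : ∃ x y : L, ⁅x, y⁆ = b 0 ∧ ⁅y, b k⁆ = 0 ∧ ⁅b k, x⁆ = 0 := by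
  obtain ⟨m, hm1, hm2, hmk⟩ : ∃ m, 1 ≤ m ∧ m ≤ 2 ∧ m ≠ ((k : ℕ) + 1) / 2 := by
    by_cases hk : ((k : ℕ) + 1) / 2 = 1
    · exact ⟨2, by omega, le_rfl, by omega⟩
    · exact ⟨1, le_rfl, by omega, by omega⟩
  refine ⟨b ⟨2 * m - 1, by omega⟩, b ⟨2 * m - 1 + 1, by omega⟩, hb.lie_odd_succ (by omega) _,
    hb.lie_eq_zero_of_div_two_ne ?_, hb.lie_eq_zero_of_div_two_ne ?_⟩ <;> simp only <;> omega

end IsHeisenbergBasis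

/-- For every `n ≥ 2`, the central basis element `X₁ = b 0` of the `(2n+1)`-dimensional
Heisenberg Lie algebra lies in the radical of every 2-cocycle. -/
theorem heisenberg_center_in_radical_of_cocycle
    {n : ℕ} (hn : 2 ≤ n)
    {L : Type*} [LieRing L] [LieAlgebra ℝ L]
    (b : Module.Basis (Fin (2 * n + 1)) ℝ L) (hb : IsHeisenbergBasis b)
    (ω : L →ₗ[ℝ] L →ₗ[ℝ] ℝ) (hω : IsCocycle ω) :
    ∀ v : L, ω (b 0) v = 0 := by
  have hzero : ω (b 0) = 0 := b.ext fun k => by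
    obtain ⟨x, y, hxy, hyk, hkx⟩ := hb.exists_lie_eq_center_of_commute hn k
    simpa [← hxy] using hω.apply_lie_eq_zero hyk hkx
  simp [hzero]
end

section
/- The product Lie algebra 𝔥₅ × 𝔥₅ of two copies of the 5-dimensional Heisenberg Lie algebra admits no symplectic structure. -/
/-- `b` is a basis of `L` exhibiting it as the 5-dimensional Heisenberg Lie algebra 𝔥₅:
writing `X k = b (k-1)`, the only nonzero brackets are
`⁅X₂,X₃⁆ = X₁ = -⁅X₃,X₂⁆` and `⁅X₄,X₅⁆ = X₁ = -⁅X₅,X₄⁆`. -/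
def IsH5Basis {L : Type*} [LieRing L] [LieAlgebra ℝ L] (b : Module.Basis (Fin 5) ℝ L) : Prop :=
  ∀ i j : Fin 5,
    ⁅b i, b j⁆ =
      if (i = 1 ∧ j = 2) ∨ (i = 3 ∧ j = 4) then b 0
      else if (i = 2 ∧ j = 1) ∨ (i = 4 ∧ j = 3) then -(b 0)
      else 0

/-!
If `z = ⁅x, y⁆` and `w` commutes with `x` and `y`, the cocycle identity gives `ω z w = 0`.
The centre `X₁` of `𝔥₅` is both `⁅X₂, X₃⁆` and `⁅X₄, X₅⁆`; every basis vector of `𝔥₅`, and all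
of the other factor, commutes with one of these two pairs, so `X₁` lies in the kernel of any
2-cocycle on `𝔥₅ × 𝔪`, for any Lie algebra `𝔪`.
-/

theorem IsCocycle.apply_lie_eq_zero_s14 {L : Type*} [LieRing L] [LieAlgebra ℝ L]
    {ω : L →ₗ[ℝ] L →ₗ[ℝ] ℝ} (hω : IsCocycle ω) {x y w : L}
    (hyw : ⁅y, w⁆ = 0) (hwx : ⁅w, x⁆ = 0) : ω ⁅x, y⁆ w = 0 := by
  simpa [hyw, hwx] using hω.2 x y w

theorem IsH5Basis.exists_commuting_lie_eq_basis_zero {L : Type*} [LieRing L] [LieAlgebra ℝ L]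
    {b : Module.Basis (Fin 5) ℝ L} (hb : IsH5Basis b) (i : Fin 5) :
    ∃ x y : L, ⁅x, y⁆ = b 0 ∧ ⁅y, b i⁆ = 0 ∧ ⁅b i, x⁆ = 0 := by
  unfold IsH5Basis at hb
  fin_cases i <;>
    [use b 1, b 2; use b 3, b 4; use b 3, b 4; use b 1, b 2; use b 1, b 2] <;>
    simp [hb]

theorem heisenberg5_prod_heisenberg5_no_symplectic_general
    {L M : Type*} [LieRing L] [LieAlgebra ℝ L] [LieRing M] [LieAlgebra ℝ M]
    (bL : Module.Basis (Fin 5) ℝ L) (hbL : IsH5Basis bL) :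
    ¬ ∃ Ω : (L × M) →ₗ[ℝ] (L × M) →ₗ[ℝ] ℝ, IsSymplecticForm Ω := by
  rintro ⟨Ω, hΩ, hnd⟩
  have hz : Ω (bL 0, 0) = 0 := by
    refine LinearMap.prod_ext (bL.ext fun i => ?_) (LinearMap.ext fun m => ?_)
    · obtain ⟨x, y, hxy, hy, hx⟩ := hbL.exists_commuting_lie_eq_basis_zero i
      simpa [hxy] using hΩ.apply_lie_eq_zero_s14 (x := (x, 0)) (y := (y, 0)) (w := (bL i, 0))
        (by simp [hy]) (by simp [hx])
    · obtain ⟨x, y, hxy, -, -⟩ := hbL.exists_commuting_lie_eq_basis_zero 0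
      simpa [hxy] using hΩ.apply_lie_eq_zero_s14 (x := (x, 0)) (y := (y, 0)) (w := (0, m))
        (by simp) (by simp)
  exact bL.ne_zero 0 (congrArg Prod.fst (hnd (bL 0, 0) fun y => by simp [hz]))

/-- The product `𝔥₅ × 𝔥₅` of two copies of the 5-dimensional Heisenberg Lie algebra admits
no symplectic structure. -/
theorem heisenberg5_prod_heisenberg5_no_symplectic
    {L M : Type*} [LieRing L] [LieAlgebra ℝ L] [LieRing M] [LieAlgebra ℝ M]
    (bL : Module.Basis (Fin 5) ℝ L) (hbL : IsH5Basis bL)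
    (bM : Module.Basis (Fin 5) ℝ M) (hbM : IsH5Basis bM) :
    ¬ ∃ Ω : (L × M) →ₗ[ℝ] (L × M) →ₗ[ℝ] ℝ, IsSymplecticForm Ω :=
  heisenberg5_prod_heisenberg5_no_symplectic_general bL hbL
end
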